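/- arXiv:2605.07173 — 2 statements merged into one kernel-verified Lean document; each statement's English description precedes it below -/
import Mathlib

section
/- Let G ∈ ℝ^{n×n} and J ∈ ℝ^{m×n} with row index sets α, β ⊆ {1,…,m} (disjoint). Define the critical cone C = {d ∈ ℝ^n : J_α d = 0, J_β d ≤ 0}. Suppose the rows {J_i : i ∈ α ∪ β} are linearly independent and ⟨d, G d⟩ > 0 for all nonzero d ∈ C. Then the only solution (d_x, d_y) ∈ ℝ^n × ℝ^{|α|+|β|} of the linear complementarity system G d_x + J_α^T [d_y]_α + J_β^T [d_y]_β = 0, J_α d_x = 0, 0 ≥ J_β d_x ⟂ [d_y]_β ≥ 0, is d_x = 0 and [d_y]_{α∪β} = 0. -/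
/-!
Pairing the stationarity equation with `dx` kills the multiplier terms (the `α`-rows by
`J_α dx = 0`, the `β`-rows by complementarity), so `⟨dx, G dx⟩ = 0`. Since `dx` lies in the
critical cone, second-order sufficiency forces `dx = 0`; stationarity then says that the
active rows combine to zero with coefficients `dy`, and LICQ makes these coefficients vanish.
-/

open Matrix

section

variable {R m ι : Type*} [CommRing R] [Fintype m]

theorem dotProduct_sum_smul_rows (v : m → R) (s : Finset ι) (c : ι → R) (J : Matrix ι m R) :
    v ⬝ᵥ ∑ i ∈ s, c i • J i = ∑ i ∈ s, (J i ⬝ᵥ v) * c i := by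
  rw [dotProduct_sum]
  refine Finset.sum_congr rfl fun i _ => ?_
  rw [dotProduct_smul, dotProduct_comm, smul_eq_mul, mul_comm]

theorem dotProduct_multipliers_eq_zero {J : Matrix ι m R} {α β : Finset ι} {v : m → R}
    {c : ι → R} (hα : ∀ i ∈ α, J i ⬝ᵥ v = 0) (hcomp : ∑ i ∈ β, (J i ⬝ᵥ v) * c i = 0) :
    v ⬝ᵥ (∑ i ∈ α, c i • J i + ∑ i ∈ β, c i • J i) = 0 := by
  rw [dotProduct_add, dotProduct_sum_smul_rows, dotProduct_sum_smul_rows, hcomp, add_zero]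
  exact Finset.sum_eq_zero fun i hi => by rw [hα i hi, zero_mul]

theorem LinearIndependent.eq_zero_of_sum_smul_eq_zero {M : Type*} [AddCommGroup M] [Module R M]
    {v : ι → M} {s : Finset ι} (hv : LinearIndependent R fun i : s => v i) {c : ι → R}
    (h : ∑ i ∈ s, c i • v i = 0) : ∀ i ∈ s, c i = 0 := by
  intro i hi
  refine Fintype.linearIndependent_iff.mp hv (fun i => c i) ?_ ⟨i, hi⟩
  rwa [Finset.sum_coe_sort s fun i => c i • v i]

end

theorem stmt8_general {n q : ℕ} (G : Matrix (Fin n) (Fin n) ℝ) (J : Matrix (Fin q) (Fin n) ℝ)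
    (α β : Finset (Fin q)) (hdisj : Disjoint α β)
    (hLI : LinearIndependent ℝ (fun i : {i : Fin q // i ∈ α ∪ β} => J i.1))
    (hSOC : ∀ d : Fin n → ℝ, d ≠ 0 →
      (∀ i ∈ α, J i ⬝ᵥ d = 0) → (∀ i ∈ β, J i ⬝ᵥ d ≤ 0) → 0 < d ⬝ᵥ G.mulVec d)
    (dx : Fin n → ℝ) (dy : Fin q → ℝ)
    (heq : G.mulVec dx + ((∑ i ∈ α, dy i • J i) + ∑ i ∈ β, dy i • J i) = 0)
    (hkerα : ∀ i ∈ α, J i ⬝ᵥ dx = 0)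
    (hβ1 : ∀ i ∈ β, J i ⬝ᵥ dx ≤ 0)
    (hcomp : ∑ i ∈ β, (J i ⬝ᵥ dx) * dy i = 0) :
    dx = 0 ∧ ∀ i ∈ α ∪ β, dy i = 0 := by
  have hquad : dx ⬝ᵥ G *ᵥ dx = 0 := by
    rw [eq_neg_of_add_eq_zero_left heq, dotProduct_neg,
      dotProduct_multipliers_eq_zero hkerα hcomp, neg_zero]
  have hdx : dx = 0 := by
    by_contra hne
    exact (hSOC dx hne hkerα hβ1).ne' hquad
  subst hdx
  refine ⟨rfl, hLI.eq_zero_of_sum_smul_eq_zero ?_⟩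
  simpa [Finset.sum_union hdisj] using heq

/-- LICQ of the active rows plus positive definiteness of `G` on the critical
cone `C = {d : J_α d = 0, J_β d ≤ 0}` imply that the only solution of the linear
complementarity system
`G d_x + J_αᵀ [d_y]_α + J_βᵀ [d_y]_β = 0, J_α d_x = 0, 0 ≥ J_β d_x ⟂ [d_y]_β ≥ 0`
is `d_x = 0`, `[d_y]_{α∪β} = 0`. -/
theorem stmt8 {n q : ℕ} (G : Matrix (Fin n) (Fin n) ℝ) (J : Matrix (Fin q) (Fin n) ℝ)
    (α β : Finset (Fin q)) (hdisj : Disjoint α β)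
    (hLI : LinearIndependent ℝ (fun i : {i : Fin q // i ∈ α ∪ β} => J i.1))
    (hSOC : ∀ d : Fin n → ℝ, d ≠ 0 →
      (∀ i ∈ α, J i ⬝ᵥ d = 0) → (∀ i ∈ β, J i ⬝ᵥ d ≤ 0) → 0 < d ⬝ᵥ G.mulVec d)
    (dx : Fin n → ℝ) (dy : Fin q → ℝ)
    (heq : G.mulVec dx + ((∑ i ∈ α, dy i • J i) + ∑ i ∈ β, dy i • J i) = 0)
    (hkerα : ∀ i ∈ α, J i ⬝ᵥ dx = 0)
    (hβ1 : ∀ i ∈ β, J i ⬝ᵥ dx ≤ 0)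
    (hβ2 : ∀ i ∈ β, 0 ≤ dy i)
    (hcomp : ∑ i ∈ β, (J i ⬝ᵥ dx) * dy i = 0) :
    dx = 0 ∧ ∀ i ∈ α ∪ β, dy i = 0 :=
  stmt8_general G J α β hdisj hLI hSOC dx dy heq hkerα hβ1 hcomp
end

section
/- Consider the shared-constraint setting: players ν = 1,…,N with Lagrangians l_ν(x,y) = θ_ν(x) + ⟨y, g(x)⟩ for a common g : ℝ^n → ℝ^m and shared multiplier y, and suppose (x̄, ȳ) satisfies the consensus KKT conditions ∇_{x^ν} l_ν(x̄, ȳ) = 0 for all ν and ȳ ∈ N_K(g(x̄)) with K = {0_q} × ℝ^{m−q}₋. Let α, β be the strongly active and degenerate index sets, and define the critical cone C(x̄,ȳ) = {d ∈ ℝ^n : J g_α(x̄) d = 0, J g_β(x̄) d ≤ 0}. If ⟨d, G^T d⟩ > 0 for all nonzero d ∈ C(x̄,ȳ), where G is the N×N block matrix with (ν,μ) block ∇²_{x^ν x^μ} l_ν(x̄, ȳ), then x̄ is a local generalized Nash equilibrium. -/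
open Filter Topology Asymptotics

/-! Fix a player `ν` and restrict everything to its block through `z ↦ update x̄ ν z`. This gives a
nonlinear program whose Lagrangian is the restriction of `l_ν`, so it inherits stationarity and the
multiplier conditions; its critical cone embeds in `C(x̄,ȳ)` by `d ↦ Pi.single ν d`, where the
block quadratic form reduces to the diagonal block `∇²_{x^ν x^ν} l_ν`.

The restricted program then satisfies the classical second-order sufficient condition. If `x̄^ν`
were not a local minimizer, feasible points with smaller objective would accumulate at `x̄^ν` along
a nonzero tangent direction `d`. Fermat's rule along these points puts `d` in the critical cone,
whereas the Lagrangian, which lies below the objective on the feasible set and agrees with it at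
`x̄^ν`, is maximal at `x̄^ν` among these points, so its second-order Taylor expansion gives
`⟨d, ∇² L d⟩ ≤ 0`. -/

section SecondOrder

variable {E G : Type*} [NormedAddCommGroup E] [NormedSpace ℝ E]
  [NormedAddCommGroup G] [NormedSpace ℝ G]

theorem isLittleO_norm_sq_of_hasFDerivAt {R : E → G} {R' : E → E →L[ℝ] G} (h0 : R 0 = 0)
    (hR : ∀ᶠ v in 𝓝 0, HasFDerivAt R (R' v) v) (hR' : R' =o[𝓝 0] id) :
    R =o[𝓝 0] fun v => ‖v‖ ^ 2 := by
  refine isLittleO_iff.2 fun ε hε => ?_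
  obtain ⟨δ, hδ, hball⟩ := Metric.eventually_nhds_iff_ball.1 (hR.and (isLittleO_iff.1 hR' hε))
  filter_upwards [Metric.ball_mem_nhds 0 hδ] with v hv
  have hsub : Metric.closedBall (0 : E) ‖v‖ ⊆ Metric.ball 0 δ :=
    Metric.closedBall_subset_ball (by simpa using hv)
  have hmv := (convex_closedBall (0 : E) ‖v‖).norm_image_sub_le_of_norm_hasFDerivWithin_le
    (fun w hw => (hball w (hsub hw)).1.hasFDerivWithinAt)
    (fun w hw => ((hball w (hsub hw)).2).trans
      (mul_le_mul_of_nonneg_left (by simpa using hw) hε.le))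
    (Metric.mem_closedBall_self (norm_nonneg v)) (y := v) (by simp)
  simpa [h0, pow_two, mul_assoc] using hmv

theorem ContDiffAt.isLittleO_taylor_two {F : E → G} {a : E} (hF : ContDiffAt ℝ 2 F a) :
    (fun v => F (a + v) - F a - fderiv ℝ F a v - (2 : ℝ)⁻¹ • fderiv ℝ (fderiv ℝ F) a v v)
      =o[𝓝 0] fun v => ‖v‖ ^ 2 := by
  set B := fderiv ℝ (fderiv ℝ F) a
  have hsymm : ∀ v w, B v w = B w v := hF.isSymmSndFDerivAt (by simp)
  have hB : HasFDerivAt (fderiv ℝ F) B a :=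
    ((hF.fderiv_right le_rfl).differentiableAt one_ne_zero).hasFDerivAt
  have hdiff : ∀ᶠ v in 𝓝 (0 : E), DifferentiableAt ℝ F (a + v) :=
    (continuous_const_add a).tendsto' 0 a (add_zero a) |>.eventually <|
      (hF.eventually (by simp)).mono fun _ h => h.differentiableAt two_ne_zero
  refine isLittleO_norm_sq_of_hasFDerivAt
    (R' := fun v => fderiv ℝ F (a + v) - fderiv ℝ F a - B v) (by simp) ?_ ?_
  · filter_upwards [hdiff] with v hv
    have hquad : HasFDerivAt (fun v => (2 : ℝ)⁻¹ • B v v) (B v) v := by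
      refine ((B.hasFDerivAt.clm_apply (hasFDerivAt_id v)).const_smul (2 : ℝ)⁻¹).congr_fderiv ?_
      ext w
      simp only [smul_apply, add_apply,
        ContinuousLinearMap.comp_id, ContinuousLinearMap.flip_apply, id, hsymm w v]
      module
    exact (((hv.hasFDerivAt.comp v ((hasFDerivAt_id v).const_add a)).sub_const _).sub
      (fderiv ℝ F a).hasFDerivAt).sub hquad
  · exact hasFDerivAt_iff_isLittleO_nhds_zero.1 hB

theorem IsLocalMaxOn.fderiv_fderiv_apply_nonpos {F : E → ℝ} {s : Set E} {a y : E}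
    (hmax : IsLocalMaxOn F s a) (hF : ContDiffAt ℝ 2 F a) (hcrit : fderiv ℝ F a = 0)
    (hy : y ∈ tangentConeAt ℝ s a) : fderiv ℝ (fderiv ℝ F) a y y ≤ 0 := by
  obtain ⟨α, l, hl, c, d, hd0, hds, hcd⟩ := exists_fun_of_mem_tangentConeAt hy
  set B := fderiv ℝ (fderiv ℝ F) a
  set R := fun v => F (a + v) - F a - fderiv ℝ F a v - (2 : ℝ)⁻¹ • B v v
  have hcdsq : Tendsto (fun n => ‖c n • d n‖ ^ 2) l (𝓝 (‖y‖ ^ 2)) := hcd.norm.pow 2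
  have hrem : Tendsto (fun n => c n ^ 2 * R (d n)) l (𝓝 0) := by
    have h := (hF.isLittleO_taylor_two.comp_tendsto hd0).mul_isBigO
      (isBigO_refl (fun n => c n ^ 2) l)
    refine (isLittleO_one_iff ℝ).1 (h.trans_isBigO ?_) |>.congr fun n => mul_comm _ _
    refine hcdsq.isBigO_one ℝ |>.congr_left fun n => ?_
    simp [norm_smul, mul_pow, mul_comm]
  have hquad : Tendsto (fun n => (2 : ℝ)⁻¹ * B (c n • d n) (c n • d n)) l
      (𝓝 ((2 : ℝ)⁻¹ * B y y)) :=
    ((isBoundedBilinearMap_apply.continuous.tendsto _).comp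
      (((B.continuous.tendsto y).comp hcd).prodMk_nhds hcd)).const_mul _
  have hlim : Tendsto (fun n => c n ^ 2 * (F (a + d n) - F a)) l (𝓝 ((2 : ℝ)⁻¹ * B y y)) := by
    rw [← zero_add ((2 : ℝ)⁻¹ * B y y)]
    refine (hrem.add hquad).congr fun n => ?_
    simp only [R, hcrit, zero_apply, sub_zero, smul_eq_mul, map_smul, smul_apply]
    ring
  have hnear : Tendsto (fun n => a + d n) l (𝓝[s] a) :=
    tendsto_nhdsWithin_iff.2 ⟨by simpa using tendsto_const_nhds.add hd0, hds⟩
  have hle : (2 : ℝ)⁻¹ * B y y ≤ 0 :=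
    le_of_tendsto hlim <| (hnear.eventually hmax).mono fun n hn =>
      mul_nonpos_of_nonneg_of_nonpos (sq_nonneg _) (sub_nonpos.2 hn)
  linarith

theorem exists_ne_zero_mem_posTangentConeAt [ProperSpace E] {s : Set E} {x : E}
    (hx : AccPt x (𝓟 s)) : ∃ y ∈ posTangentConeAt s x, y ≠ 0 := by
  rw [accPt_principal_iff_clusterPt, ← mem_closure_iff_clusterPt] at hx
  obtain ⟨v, hvs, hv⟩ := mem_closure_iff_seq_limit.1 hx
  have hne : ∀ n, v n - x ≠ 0 := fun n => sub_ne_zero.2 (hvs n).2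
  obtain ⟨y, hy, φ, hφ, hlim⟩ := (isCompact_sphere (0 : E) 1).tendsto_subseq
    (x := fun n => ‖v n - x‖⁻¹ • (v n - x))
    fun n => by simpa using norm_smul_inv_norm (𝕜 := ℝ) (hne n)
  refine ⟨y, mem_tangentConeAt_of_seq atTop (fun n => ‖v (φ n) - x‖₊⁻¹) (fun n => v (φ n) - x)
    ?_ (.of_forall fun n => by simpa using (hvs (φ n)).1) ?_, ne_zero_of_mem_unit_sphere ⟨y, hy⟩⟩
  · simpa using ((hv.comp hφ.tendsto_atTop).sub_const x)
  · simpa [NNReal.smul_def, Function.comp_def] using hlim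

theorem isLocalMinOn_of_fderiv_fderiv_pos [ProperSpace E] {f F : E → ℝ} {s : Set E} {a : E}
    (hF : ContDiffAt ℝ 2 F a) (hcrit : fderiv ℝ F a = 0) (hFa : F a = f a)
    (hle : ∀ z ∈ s, F z ≤ f z)
    (hpos : ∀ y ∈ posTangentConeAt {z ∈ s | f z < f a} a, y ≠ 0 →
      0 < fderiv ℝ (fderiv ℝ F) a y y) :
    IsLocalMinOn f s a := by
  by_contra hmin
  have hacc : AccPt a (𝓟 {z ∈ s | f z < f a}) := by
    rw [accPt_iff_frequently]
    have := frequently_nhdsWithin_iff.1 (not_eventually.1 hmin)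
    exact this.mono fun z ⟨hz, hzs⟩ => ⟨fun h => hz (h ▸ le_rfl), hzs, not_le.1 hz⟩
  obtain ⟨y, hy, hy0⟩ := exists_ne_zero_mem_posTangentConeAt hacc
  have hmax : IsLocalMaxOn F {z ∈ s | f z < f a} a :=
    IsMaxOn.localize <| isMaxOn_iff.2 fun z hz => (hle z hz.1).trans (hFa ▸ hz.2.le)
  exact (hpos y hy hy0).not_ge <|
    hmax.fderiv_fderiv_apply_nonpos hF hcrit (tangentConeAt_mono_field hy)

end SecondOrder

section NonlinearProgram

variable {E ι : Type*} [Fintype ι] {p : ι → Prop} {f : E → ℝ} {h : ι → E → ℝ} {y : ι → ℝ}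
  {a : E}

variable (f h y) in
def lagrangian (z : E) : ℝ :=
  f z + ∑ i, y i * h i z

variable (p h) in
def feasibleSet : Set E :=
  {z | (∀ i, p i → h i z = 0) ∧ ∀ i, ¬p i → h i z ≤ 0}

theorem lagrangian_le_of_mem_feasibleSet (hy : ∀ i, ¬p i → 0 ≤ y i) {z : E}
    (hz : z ∈ feasibleSet p h) : lagrangian f h y z ≤ f z := by
  refine add_le_of_nonpos_right (Finset.sum_nonpos fun i _ => ?_)
  by_cases hi : p i
  · simp [hz.1 i hi]
  · exact mul_nonpos_of_nonneg_of_nonpos (hy i hi) (hz.2 i hi)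

theorem lagrangian_eq_of_complementary (heq : ∀ i, p i → h i a = 0)
    (hcomp : ∀ i, ¬p i → y i * h i a = 0) :
    lagrangian f h y a = f a := by
  refine add_eq_left.2 (Finset.sum_eq_zero fun i _ => ?_)
  by_cases hi : p i
  · simp [heq i hi]
  · exact hcomp i hi

variable [NormedAddCommGroup E] [NormedSpace ℝ E]

-- The two conjuncts are the paper's index sets `α` (equality or strongly active constraints)
-- and `β` (degenerate ones).
variable (p h y a) in
def criticalCone : Set E :=
  {d | (∀ i, p i ∨ (h i a = 0 ∧ 0 < y i) → fderiv ℝ (h i) a d = 0) ∧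
    ∀ i, ¬p i ∧ h i a = 0 ∧ y i = 0 → fderiv ℝ (h i) a d ≤ 0}

theorem fderiv_lagrangian_apply (hf : DifferentiableAt ℝ f a)
    (hh : ∀ i, DifferentiableAt ℝ (h i) a) (d : E) :
    fderiv ℝ (lagrangian f h y) a d = fderiv ℝ f a d + ∑ i, y i * fderiv ℝ (h i) a d := by
  have hL : HasFDerivAt (lagrangian f h y) (fderiv ℝ f a + ∑ i, y i • fderiv ℝ (h i) a) a :=
    hf.hasFDerivAt.add (HasFDerivAt.fun_sum fun i _ => (hh i).hasFDerivAt.const_mul (y i))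
  simp [hL.fderiv]

theorem mem_criticalCone_of_mem_posTangentConeAt (hf : DifferentiableAt ℝ f a)
    (hh : ∀ i, DifferentiableAt ℝ (h i) a) (hcrit : fderiv ℝ (lagrangian f h y) a = 0)
    (heq : ∀ i, p i → h i a = 0) (hy : ∀ i, ¬p i → 0 ≤ y i)
    (hcomp : ∀ i, ¬p i → y i * h i a = 0) {d : E}
    (hd : d ∈ posTangentConeAt {z ∈ feasibleSet p h | f z < f a} a) :
    d ∈ criticalCone p h y a := by
  have hnonpos : ∀ φ : E → ℝ, DifferentiableAt ℝ φ a →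
      (∀ z ∈ {z ∈ feasibleSet p h | f z < f a}, φ z ≤ φ a) → fderiv ℝ φ a d ≤ 0 :=
    fun φ hφ hle => (isMaxOn_iff.2 hle).localize.hasFDerivWithinAt_nonpos
      hφ.hasFDerivAt.hasFDerivWithinAt hd
  have hEq : ∀ i, p i → fderiv ℝ (h i) a d = 0 := by
    intro i hi
    have hconst : ∀ z ∈ {z ∈ feasibleSet p h | f z < f a}, h i z = h i a :=
      fun z hz => (hz.1.1 i hi).trans (heq i hi).symm
    refine le_antisymm (hnonpos _ (hh i) fun z hz => (hconst z hz).le) ?_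
    simpa using hnonpos (fun z => -h i z) (hh i).neg fun z hz => by rw [hconst z hz]
  have hAct : ∀ i, ¬p i → h i a = 0 → fderiv ℝ (h i) a d ≤ 0 := fun i hi ha =>
    hnonpos _ (hh i) fun z hz => ha ▸ hz.1.2 i hi
  have hterm : ∀ i ∈ Finset.univ, y i * fderiv ℝ (h i) a d ≤ 0 := by
    intro i _
    by_cases hi : p i
    · simp [hEq i hi]
    by_cases ha : h i a = 0
    · exact mul_nonpos_of_nonneg_of_nonpos (hy i hi) (hAct i hi ha)
    · simp [(mul_eq_zero.1 (hcomp i hi)).resolve_right ha]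
  have hsum : ∑ i, y i * fderiv ℝ (h i) a d = 0 := by
    have hfd : fderiv ℝ f a d ≤ 0 := hnonpos f hf fun z hz => hz.2.le
    have hstat := fderiv_lagrangian_apply (y := y) hf hh d
    rw [hcrit, zero_apply] at hstat
    exact le_antisymm (Finset.sum_nonpos hterm) (by linarith)
  have hzero := (Finset.sum_eq_zero_iff_of_nonpos hterm).1 hsum
  refine ⟨fun i hi => hi.elim (hEq i) fun ⟨_, hyi⟩ => ?_, fun i ⟨hi, ha, _⟩ => hAct i hi ha⟩
  exact (mul_eq_zero.1 (hzero i (Finset.mem_univ i))).resolve_left hyi.ne'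

theorem isLocalMinOn_feasibleSet_of_criticalCone [ProperSpace E] (hf : ContDiffAt ℝ 2 f a)
    (hh : ∀ i, ContDiffAt ℝ 2 (h i) a) (hcrit : fderiv ℝ (lagrangian f h y) a = 0)
    (heq : ∀ i, p i → h i a = 0) (hy : ∀ i, ¬p i → 0 ≤ y i)
    (hcomp : ∀ i, ¬p i → y i * h i a = 0)
    (hSOC : ∀ d ∈ criticalCone p h y a, d ≠ 0 →
      0 < fderiv ℝ (fderiv ℝ (lagrangian f h y)) a d d) :
    IsLocalMinOn f (feasibleSet p h) a :=
  isLocalMinOn_of_fderiv_fderiv_pos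
    (hf.add (ContDiffAt.sum fun i _ => contDiffAt_const.mul (hh i))) hcrit
    (lagrangian_eq_of_complementary heq hcomp) (fun _ => lagrangian_le_of_mem_feasibleSet hy)
    fun d hd => hSOC d <| mem_criticalCone_of_mem_posTangentConeAt
      (hf.differentiableAt two_ne_zero) (fun i => (hh i).differentiableAt two_ne_zero)
      hcrit heq hy hcomp hd

end NonlinearProgram

section Block

variable {ι : Type*} [Fintype ι] [DecidableEq ι] {E : ι → Type*}
  [∀ i, NormedAddCommGroup (E i)] [∀ i, NormedSpace ℝ (E i)]
  {G : Type*} [NormedAddCommGroup G] [NormedSpace ℝ G] {φ : (∀ i, E i) → G} {x : ∀ i, E i}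
  {i : ι}

theorem ContDiffAt.comp_update {n : WithTop ℕ∞} (hφ : ContDiffAt ℝ n φ x) :
    ContDiffAt ℝ n (fun z => φ (Function.update x i z)) (x i) := by
  rw [← Function.update_eq_self i x] at hφ
  exact hφ.comp (x i) (contDiff_update n x i).contDiffAt

theorem fderiv_comp_update_apply {z : E i} (hφ : DifferentiableAt ℝ φ (Function.update x i z))
    (e : E i) :
    fderiv ℝ (fun w => φ (Function.update x i w)) z e =
      fderiv ℝ φ (Function.update x i z) (Pi.single i e) := by
  have hcomp : HasFDerivAt (fun w => φ (Function.update x i w)) _ z :=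
    hφ.hasFDerivAt.comp z (hasFDerivAt_update x z)
  rw [hcomp.fderiv, ContinuousLinearMap.comp_apply]
  congr 1
  ext j
  rcases eq_or_ne j i with rfl | hj <;> simp [*]

theorem fderiv_fderiv_comp_update_apply (hφ : ContDiffAt ℝ 2 φ x) (e : E i) :
    fderiv ℝ (fderiv ℝ (fun w => φ (Function.update x i w))) (x i) e e =
      fderiv ℝ (fun y => fderiv ℝ φ y (Pi.single i e)) x (Pi.single i e) := by
  have hnear : ∀ᶠ z in 𝓝 (x i), DifferentiableAt ℝ φ (Function.update x i z) :=
    (contDiff_update (𝕜 := ℝ) 0 x i).continuous.tendsto' (x i) x (Function.update_eq_self i x)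
      |>.eventually <| (hφ.eventually (by simp)).mono fun _ h => h.differentiableAt two_ne_zero
  have hψ : DifferentiableAt ℝ (fun y => fderiv ℝ φ y (Pi.single i e)) x :=
    ((hφ.fderiv_right le_rfl).differentiableAt one_ne_zero).clm_apply (differentiableAt_const _)
  calc fderiv ℝ (fderiv ℝ (fun w => φ (Function.update x i w))) (x i) e e
      = fderiv ℝ (fun z => fderiv ℝ (fun w => φ (Function.update x i w)) z e) (x i) e := by
        rw [fderiv_clm_apply ((hφ.comp_update.fderiv_right le_rfl).differentiableAt one_ne_zero)
          (differentiableAt_const e)]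
        simp
    _ = fderiv ℝ (fun z => fderiv ℝ φ (Function.update x i z) (Pi.single i e)) (x i) e := by
        have hloc : (fun z => fderiv ℝ (fun w => φ (Function.update x i w)) z e) =ᶠ[𝓝 (x i)]
            fun z => fderiv ℝ φ (Function.update x i z) (Pi.single i e) :=
          hnear.mono fun z hz => fderiv_comp_update_apply hz e
        rw [hloc.fderiv_eq]
    _ = fderiv ℝ (fun y => fderiv ℝ φ y (Pi.single i e)) x (Pi.single i e) := by
        have h := fderiv_comp_update_apply (φ := fun y => fderiv ℝ φ y (Pi.single i e))
          (x := x) (z := x i) (by rwa [Function.update_eq_self]) e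
        rwa [Function.update_eq_self] at h

theorem sum_fderiv_fderiv_apply_pi_single (L : ι → (∀ i, E i) → G) (e : E i) :
    ∑ j, fderiv ℝ (fun y => fderiv ℝ (L j) y (Pi.single j (Pi.single i e j))) x
        (Pi.single i e) =
      fderiv ℝ (fun y => fderiv ℝ (L i) y (Pi.single i e)) x (Pi.single i e) := by
  rw [Fintype.sum_eq_single i fun j hj => by simp [Pi.single_eq_of_ne hj]]
  simp

end Block

theorem stmt15_general {N : ℕ} (n : Fin N → ℕ) {m q : ℕ}
    (θ : Fin N → (∀ ν, EuclideanSpace ℝ (Fin (n ν))) → ℝ)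
    (g : (∀ ν, EuclideanSpace ℝ (Fin (n ν))) → Fin m → ℝ)
    (xbar : ∀ ν, EuclideanSpace ℝ (Fin (n ν))) (ybar : Fin m → ℝ)
    -- twice continuous differentiability near x̄
    (hθ : ∀ ν, ContDiffAt ℝ 2 (θ ν) xbar)
    (hg : ∀ i, ContDiffAt ℝ 2 (fun x => g x i) xbar)
    -- consensus KKT: stationarity of each player's Lagrangian with the shared multiplier
    (hstat : ∀ ν, fderiv ℝ
        (fun z => θ ν (Function.update xbar ν z) +
          ∑ i, ybar i * g (Function.update xbar ν z) i) (xbar ν) = 0)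
    -- consensus KKT: ȳ ∈ N_K(g(x̄)) with K = {0_q} × ℝ^{m-q}₋
    (hfeasEq : ∀ i : Fin m, (i : ℕ) < q → g xbar i = 0)
    (hsign : ∀ i : Fin m, q ≤ (i : ℕ) → 0 ≤ ybar i)
    (hcomp : ∀ i : Fin m, q ≤ (i : ℕ) → ybar i * g xbar i = 0)
    -- second-order condition: `⟨d, Gᵀ d⟩ > 0` for nonzero `d` in the critical cone
    (hSOC : ∀ d : (∀ ν, EuclideanSpace ℝ (Fin (n ν))), d ≠ 0 →
      (∀ i : Fin m, ((i : ℕ) < q ∨ (g xbar i = 0 ∧ 0 < ybar i)) →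
        fderiv ℝ (fun x => g x i) xbar d = 0) →
      (∀ i : Fin m, (q ≤ (i : ℕ) ∧ g xbar i = 0 ∧ ybar i = 0) →
        fderiv ℝ (fun x => g x i) xbar d ≤ 0) →
      0 < ∑ ν, fderiv ℝ (fun x => fderiv ℝ
            (fun x' => θ ν x' + ∑ i, ybar i * g x' i) x (Pi.single ν (d ν))) xbar d) :
    -- conclusion: x̄ is a local generalized Nash equilibrium
    ∀ ν, ∃ U ∈ 𝓝 (xbar ν), ∀ z ∈ U,
      (∀ i : Fin m, (i : ℕ) < q → g (Function.update xbar ν z) i = 0) →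
      (∀ i : Fin m, q ≤ (i : ℕ) → g (Function.update xbar ν z) i ≤ 0) →
      θ ν xbar ≤ θ ν (Function.update xbar ν z) := by
  intro ν
  have hL : ContDiffAt ℝ 2 (fun x => θ ν x + ∑ i, ybar i * g x i) xbar :=
    (hθ ν).add (ContDiffAt.sum fun i _ => contDiffAt_const.mul (hg i))
  have hgd : ∀ i (d : EuclideanSpace ℝ (Fin (n ν))),
      fderiv ℝ (fun z => g (Function.update xbar ν z) i) (xbar ν) d =
        fderiv ℝ (fun x => g x i) xbar (Pi.single ν d) := fun i d => by
    simpa using fderiv_comp_update_apply (φ := fun x => g x i) (x := xbar) (z := xbar ν)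
      (by simpa using (hg i).differentiableAt two_ne_zero) d
  have hmin : IsLocalMinOn (fun z => θ ν (Function.update xbar ν z))
      (feasibleSet (fun i : Fin m => (i : ℕ) < q) fun i z => g (Function.update xbar ν z) i)
      (xbar ν) := by
    refine isLocalMinOn_feasibleSet_of_criticalCone (hθ ν).comp_update
      (fun i => (hg i).comp_update) (hstat ν) (fun i hi => by simpa using hfeasEq i hi)
      (fun i hi => hsign i (not_lt.1 hi)) (fun i hi => by simpa using hcomp i (not_lt.1 hi)) ?_
    rintro d ⟨hα, hβ⟩ hd
    have hpos := hSOC (Pi.single ν d) (by simpa using hd)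
      (fun i hi => hgd i d ▸ hα i (by simpa using hi))
      (fun i ⟨hi, hgi, hyi⟩ => hgd i d ▸ hβ i ⟨not_lt.2 hi, by simpa using hgi, hyi⟩)
    rw [sum_fderiv_fderiv_apply_pi_single] at hpos
    exact hpos.trans_eq (fderiv_fderiv_comp_update_apply hL d).symm
  obtain ⟨U, hU, hUmin⟩ := (eventually_nhdsWithin_iff.1 hmin).exists_mem
  exact ⟨U, hU, fun z hz hzeq hzineq => by
    simpa using hUmin z hz ⟨hzeq, fun i hi => hzineq i (not_lt.1 hi)⟩⟩

/-- in the shared-constraint GNEP, if `(x̄,ȳ)` satisfies the consensus KKT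
conditions and the full quadratic form `d ↦ ⟨d, Gᵀd⟩` (with `G` the block matrix of
`∇²_{x^ν x^μ} l_ν(x̄,ȳ)`) is positive on the nonzero vectors of the critical cone
`C(x̄,ȳ)`, then `x̄` is a local generalized Nash equilibrium. -/
theorem stmt15 {N : ℕ} (n : Fin N → ℕ) {m q : ℕ} (hqm : q ≤ m)
    (θ : Fin N → (∀ ν, EuclideanSpace ℝ (Fin (n ν))) → ℝ)
    (g : (∀ ν, EuclideanSpace ℝ (Fin (n ν))) → Fin m → ℝ)
    (xbar : ∀ ν, EuclideanSpace ℝ (Fin (n ν))) (ybar : Fin m → ℝ)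
    -- twice continuous differentiability near x̄
    (hθ : ∀ ν, ContDiffAt ℝ 2 (θ ν) xbar)
    (hg : ∀ i, ContDiffAt ℝ 2 (fun x => g x i) xbar)
    -- consensus KKT: stationarity of each player's Lagrangian with the shared multiplier
    (hstat : ∀ ν, fderiv ℝ
        (fun z => θ ν (Function.update xbar ν z) +
          ∑ i, ybar i * g (Function.update xbar ν z) i) (xbar ν) = 0)
    -- consensus KKT: ȳ ∈ N_K(g(x̄)) with K = {0_q} × ℝ^{m-q}₋
    (hfeasEq : ∀ i : Fin m, (i : ℕ) < q → g xbar i = 0)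
    (hfeasIneq : ∀ i : Fin m, q ≤ (i : ℕ) → g xbar i ≤ 0)
    (hsign : ∀ i : Fin m, q ≤ (i : ℕ) → 0 ≤ ybar i)
    (hcomp : ∀ i : Fin m, q ≤ (i : ℕ) → ybar i * g xbar i = 0)
    -- second-order condition: `⟨d, Gᵀ d⟩ > 0` for nonzero `d` in the critical cone
    (hSOC : ∀ d : (∀ ν, EuclideanSpace ℝ (Fin (n ν))), d ≠ 0 →
      (∀ i : Fin m, ((i : ℕ) < q ∨ (g xbar i = 0 ∧ 0 < ybar i)) →
        fderiv ℝ (fun x => g x i) xbar d = 0) →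
      (∀ i : Fin m, (q ≤ (i : ℕ) ∧ g xbar i = 0 ∧ ybar i = 0) →
        fderiv ℝ (fun x => g x i) xbar d ≤ 0) →
      0 < ∑ ν, fderiv ℝ (fun x => fderiv ℝ
            (fun x' => θ ν x' + ∑ i, ybar i * g x' i) x (Pi.single ν (d ν))) xbar d) :
    -- conclusion: x̄ is a local generalized Nash equilibrium
    ∀ ν, ∃ U ∈ 𝓝 (xbar ν), ∀ z ∈ U,
      (∀ i : Fin m, (i : ℕ) < q → g (Function.update xbar ν z) i = 0) →
      (∀ i : Fin m, q ≤ (i : ℕ) → g (Function.update xbar ν z) i ≤ 0) →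
      θ ν xbar ≤ θ ν (Function.update xbar ν z) :=
  stmt15_general n θ g xbar ybar hθ hg hstat hfeasEq hsign hcomp hSOC
end
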